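/- Let m ≥ 1 and let V be an entire-analytic rank-2 tensor field on ℝ^m that is symmetric (V_ij = V_ji). Then the following are equivalent: (a) for every ℓ ≥ 0, the array of iterated derivatives at the origin (∂_{i₁}⋯∂_{i_ℓ} V_{ij})(0) is invariant under every permutation of the full index set (i₁, …, i_ℓ, i, j); (b) ∂_i V_jk(x) = ∂_j V_ik(x) for all x ∈ ℝ^m and all indices i, j, k. -/

import Mathlib

/-!
STATEMENT 7: For an entire-analytic symmetric rank-2 tensor field V on ℝ^m, the
full symmetry of all the arrays of iterated derivatives at the origin
(∂_{i₁}⋯∂_{i_ℓ} V_{ij})(0) under permutations of the full index set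
(i₁,…,i_ℓ,i,j) is equivalent to the pointwise condition
∂_i V_jk(x) = ∂_j V_ik(x) everywhere.
-/

noncomputable section

/-- Euclidean space ℝ^m. -/
abbrev E (m : ℕ) := EuclideanSpace ℝ (Fin m)

/-- The i-th partial derivative. -/
def pd {m : ℕ} (i : Fin m) (f : E m → ℝ) : E m → ℝ :=
  fun x => fderiv ℝ f x (EuclideanSpace.single i 1)

/-- Iterated partial derivative ∂_{v 0} ∂_{v 1} ⋯ ∂_{v (ℓ-1)} f. -/
def pdIter {m : ℕ} : (ℓ : ℕ) → (Fin ℓ → Fin m) → (E m → ℝ) → E m → ℝ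
  | 0, _, f => f
  | (ℓ + 1), v, f => pd (v 0) (pdIter ℓ (fun a => v a.succ) f)

/-- Entire-analytic: the function is given by a power series centered at the
origin converging (to the function) on all of ℝ^m. -/
def Entire {m : ℕ} (f : E m → ℝ) : Prop :=
  ∃ p : FormalMultilinearSeries ℝ (E m) ℝ, HasFPowerSeriesOnBall f p 0 ⊤

/-- The array of ℓ-th iterated derivatives of V at the origin, indexed by all
ℓ+2 indices (i₁,…,i_ℓ,i,j): w ↦ (∂_{w 2}⋯∂_{w (ℓ+1)} V_{w 0, w 1})(0). -/
def derivArray {m : ℕ} (V : Fin m → Fin m → E m → ℝ) (ℓ : ℕ)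
    (w : Fin (ℓ + 2) → Fin m) : ℝ :=
  pdIter ℓ (fun a => w a.succ.succ) (V (w 0) (w 1)) 0

namespace Aux

variable {m : ℕ}

def sgl (i : Fin m) : E m := EuclideanSpace.single i 1

lemma pd_contDiff {f : E m → ℝ} (hf : ContDiff ℝ (⊤ : ℕ∞) f) (i : Fin m) : ContDiff ℝ (⊤ : ℕ∞) (pd i f) :=
  (ContinuousLinearMap.apply ℝ ℝ (sgl i)).contDiff.comp (hf.fderiv_right (by simp))

lemma fderiv_pd {f : E m → ℝ} (hf : ContDiff ℝ (⊤ : ℕ∞) f) (j : Fin m) (x : E m) :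
    fderiv ℝ (pd j f) x = (ContinuousLinearMap.apply ℝ ℝ (sgl j)).comp
      (fderiv ℝ (fderiv ℝ f) x) := by
  have hdf : DifferentiableAt ℝ (fderiv ℝ f) x :=
    ((hf.fderiv_right (m := (⊤ : ℕ∞)) (by simp)).differentiable (by simp)) x
  exact (((ContinuousLinearMap.apply ℝ ℝ (sgl j)).hasFDerivAt).comp x hdf.hasFDerivAt).fderiv

lemma pd_comm {f : E m → ℝ} (hf : ContDiff ℝ (⊤ : ℕ∞) f) (i j : Fin m) :
    pd i (pd j f) = pd j (pd i f) := by
  funext x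
  have h := (hf.contDiffAt (x := x)).isSymmSndFDerivAt (by rw [minSmoothness_of_isRCLikeNormedField]; exact WithTop.coe_le_coe.2 le_top)
  show fderiv ℝ (pd j f) x (sgl i) = fderiv ℝ (pd i f) x (sgl j)
  rw [fderiv_pd hf j x, fderiv_pd hf i x]
  exact h (sgl i) (sgl j)

def Dl : List (Fin m) → (E m → ℝ) → E m → ℝ
  | [], f => f
  | i :: L, f => pd i (Dl L f)

lemma Dl_contDiff : ∀ (L : List (Fin m)) {f : E m → ℝ}, ContDiff ℝ (⊤ : ℕ∞) f → ContDiff ℝ (⊤ : ℕ∞) (Dl L f)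
  | [], _, hf => hf
  | _ :: L, _, hf => pd_contDiff (Dl_contDiff L hf) _

lemma Dl_append (L : List (Fin m)) (i : Fin m) (f : E m → ℝ) :
    Dl (L ++ [i]) f = Dl L (pd i f) := by
  induction L with
  | nil => rfl
  | cons x L ih => show pd x (Dl (L ++ [i]) f) = pd x (Dl L (pd i f)); rw [ih]

lemma Dl_perm {L L' : List (Fin m)} (h : L.Perm L') :
    ∀ {f : E m → ℝ}, ContDiff ℝ (⊤ : ℕ∞) f → Dl L f = Dl L' f := by
  induction h with
  | nil => intro f _; rfl
  | cons x _ ih => intro f hf; show pd x _ = pd x _; rw [ih hf]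
  | swap x y L =>
      intro f hf
      show pd y (pd x (Dl L f)) = pd x (pd y (Dl L f))
      exact pd_comm (Dl_contDiff L hf) y x
  | trans _ _ ih1 ih2 => intro f hf; rw [ih1 hf, ih2 hf]

lemma pdIter_eq_Dl {m : ℕ} : ∀ (ℓ : ℕ) (v : Fin ℓ → Fin m) (f : E m → ℝ),
    pdIter ℓ v f = Dl (List.ofFn v) f
  | 0, v, f => by simp [pdIter, Dl]
  | (ℓ + 1), v, f => by
      rw [List.ofFn_succ]
      show pd (v 0) _ = pd (v 0) _
      rw [pdIter_eq_Dl ℓ]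



variable {m : ℕ}

lemma pair_perm {α : Type*} {a b c d : α} (h : [a, b].Perm [c, d]) :
    (a = c ∧ b = d) ∨ (a = d ∧ b = c) := by
  have ha : a = c ∨ a = d := by simpa using h.subset (List.mem_cons_self (a := a))
  rcases ha with rfl | rfl
  · left
    refine ⟨rfl, ?_⟩
    have h2 := h.cons_inv
    simpa [List.perm_singleton] using h2
  · right
    refine ⟨rfl, ?_⟩
    have h2 : [a, b].Perm [a, c] := h.trans (List.Perm.swap a c [])
    simpa [List.perm_singleton] using h2.cons_inv

lemma key (n : ℕ) :
    ∀ (W : Fin m → Fin m → E m → ℝ),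
      (∀ i j, ContDiff ℝ (⊤ : ℕ∞) (W i j)) →
      (∀ i j, W i j = W j i) →
      (∀ i j k, pd i (W j k) = pd j (W i k)) →
      ∀ (L : List (Fin m)) (a b : Fin m) (L' : List (Fin m)) (a' b' : Fin m),
        L.length = n → (a :: b :: L).Perm (a' :: b' :: L') →
        Dl L (W a b) = Dl L' (W a' b') := by
  induction n with
  | zero =>
    intro W hW1 hW2 hW3 L a b L' a' b' hlen hperm
    have hL : L = [] := List.length_eq_zero_iff.mp hlen
    subst hL
    have hL' : L' = [] := by
      have := hperm.length_eq
      simp at this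
      exact this
    subst hL'
    rcases pair_perm hperm with ⟨rfl, rfl⟩ | ⟨rfl, rfl⟩
    · rfl
    · show W a b = W b a
      rw [hW2]
  | succ n IH =>
    intro W hW1 hW2 hW3 L a b L' a' b' hlen hperm
    have hlen' : L'.length = n + 1 := by
      have := hperm.length_eq
      simp at this
      omega
    obtain ⟨M', c, rfl⟩ : ∃ M' c, L' = M' ++ [c] := by
      rcases List.eq_nil_or_concat L' with h | ⟨M', c, h⟩
      · rw [h] at hlen'; simp at hlen'
      · rw [List.concat_eq_append] at h
        exact ⟨M', c, h⟩
    have hMlen : M'.length = n := by simp at hlen'; omega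
    rw [Dl_append M' c (W a' b')]
    -- the derived family given a direction e : Fin m
    have hder : ∀ e : Fin m,
        (∀ i j, ContDiff ℝ (⊤ : ℕ∞) (fun x => pd e (W i j) x)) ∧
        (∀ i j, (fun x => pd e (W i j) x) = (fun x => pd e (W j i) x)) ∧
        (∀ i j k, pd i (fun x => pd e (W j k) x) = pd j (fun x => pd e (W i k) x)) := by
      intro e
      refine ⟨fun i j => pd_contDiff (hW1 i j) e, fun i j => by rw [hW2 i j], fun i j k => ?_⟩
      calc pd i (pd e (W j k)) = pd e (pd i (W j k)) := pd_comm (hW1 j k) i e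
        _ = pd e (pd j (W i k)) := by rw [hW3 i j k]
        _ = pd j (pd e (W i k)) := pd_comm (hW1 i k) e j
    by_cases hc : c ∈ L
    · have hp1 : L.Perm (L.erase c ++ [c]) :=
        (List.perm_cons_erase hc).trans (List.perm_append_singleton c (L.erase c)).symm
      rw [Dl_perm hp1 (hW1 a b), Dl_append]
      obtain ⟨h1, h2, h3⟩ := hder c
      refine IH (fun i j => pd c (W i j)) h1 h2 h3 (L.erase c) a b M' a' b' ?_ ?_
      · rw [List.length_erase_of_mem hc, hlen]
        omega
      · have q0 := List.perm_cons_erase hc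
        have q1 : (a :: b :: L).Perm (c :: a :: b :: L.erase c) :=
          ((q0.cons b).cons a).trans (List.perm_middle (l₁ := [a, b]) (l₂ := L.erase c))
        have q2 : (a' :: b' :: (M' ++ [c])).Perm (c :: a' :: b' :: M') :=
          List.perm_append_singleton c (a' :: b' :: M')
        exact ((q1.symm.trans hperm).trans q2).cons_inv
    · -- c ∉ L, so c = a or c = b
      have hcab : c = a ∨ c = b := by
        have hcm : c ∈ a :: b :: L := hperm.symm.subset (by simp)
        simp at hcm
        tauto
      obtain ⟨d, T, rfl⟩ : ∃ d T, L = d :: T := by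
        cases L with
        | nil => simp at hlen
        | cons d T => exact ⟨d, T, rfl⟩
      have hTlen : T.length = n := by simp at hlen; omega
      have main_a : ∀ (u v : Fin m),
          (u :: v :: d :: T).Perm (a' :: b' :: (M' ++ [u])) →
          Dl (d :: T) (W u v) = Dl M' (pd u (W a' b')) := by
        intro u v hp
        have e1 : Dl (d :: T) (W u v) = Dl T (pd d (W u v)) := by
          rw [Dl_perm ((List.perm_append_singleton d T).symm) (hW1 u v), Dl_append]
        rw [e1, hW3 d u v]
        obtain ⟨h1, h2, h3⟩ := hder u
        refine IH (fun i j => pd u (W i j)) h1 h2 h3 T d v M' a' b' hTlen ?_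
        have q1 : (u :: v :: d :: T).Perm (u :: d :: v :: T) :=
          (List.Perm.swap d v T).cons u
        have q2 : (a' :: b' :: (M' ++ [u])).Perm (u :: a' :: b' :: M') :=
          List.perm_append_singleton u (a' :: b' :: M')
        exact ((q1.symm.trans hp).trans q2).cons_inv
      rcases hcab with rfl | rfl
      · exact main_a c b hperm
      · rw [hW2 a c]
        exact main_a c a ((List.Perm.swap a c (d :: T)).trans hperm)


variable {m : ℕ}

lemma cons_cons_ofFn (ℓ : ℕ) (u : Fin (ℓ + 2) → Fin m) :
    u 0 :: u 1 :: List.ofFn (fun a : Fin ℓ => u a.succ.succ) = List.ofFn u := by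
  rw [List.ofFn_succ, List.ofFn_succ]
  simp [Fin.succ_zero_eq_one]

lemma derivArray_eq (V : Fin m → Fin m → E m → ℝ) (ℓ : ℕ) (w : Fin (ℓ + 2) → Fin m) :
    derivArray V ℓ w = Dl (List.ofFn fun a : Fin ℓ => w a.succ.succ) (V (w 0) (w 1)) 0 := by
  rw [derivArray, pdIter_eq_Dl]

lemma invariance {V : Fin m → Fin m → E m → ℝ} (hsm : ∀ i j, ContDiff ℝ (⊤ : ℕ∞) (V i j))
    (hsymm : ∀ i j, V i j = V j i) (hb : ∀ i j k, pd i (V j k) = pd j (V i k))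
    (ℓ : ℕ) (w : Fin (ℓ + 2) → Fin m) (π : Equiv.Perm (Fin (ℓ + 2))) :
    derivArray V ℓ (w ∘ π) = derivArray V ℓ w := by
  rw [derivArray_eq, derivArray_eq]
  have hperm : (((w ∘ π) 0) :: ((w ∘ π) 1) ::
      List.ofFn (fun a : Fin ℓ => (w ∘ π) a.succ.succ)).Perm
      ((w 0) :: (w 1) :: List.ofFn (fun a : Fin ℓ => w a.succ.succ)) := by
    rw [cons_cons_ofFn ℓ (w ∘ π), cons_cons_ofFn ℓ w]
    exact π.ofFn_comp_perm w
  exact congrFun (key ℓ V hsm hsymm hb _ _ _ _ _ _ (by simp) hperm) 0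

lemma entire_contDiff {f : E m → ℝ} (hf : Entire f) : ContDiff ℝ (⊤ : ℕ∞) f := by
  obtain ⟨p, hp⟩ := hf
  have h := hp.analyticOnNhd
  rw [Metric.emetric_ball_top] at h
  exact h.contDiff

lemma entire_pd {f : E m → ℝ} (hf : Entire f) (i : Fin m) : Entire (pd i f) := by
  obtain ⟨p, hp⟩ := hf
  exact ⟨_, (ContinuousLinearMap.apply ℝ ℝ (sgl i)).comp_hasFPowerSeriesOnBall hp.fderiv⟩

lemma pdIter_eq_iteratedFDeriv {f : E m → ℝ} (hf : ContDiff ℝ (⊤ : ℕ∞) f) :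
    ∀ (n : ℕ) (v : Fin n → Fin m) (x : E m),
      pdIter n v f x = iteratedFDeriv ℝ n f x (fun a => sgl (v a)) := by
  intro n
  induction n with
  | zero => intro v x; simp [pdIter]
  | succ n IH =>
    intro v x
    have hd : DifferentiableAt ℝ (iteratedFDeriv ℝ n f) x :=
      (hf.differentiable_iteratedFDeriv (by exact_mod_cast ENat.coe_lt_top n)) x
    have htail : pdIter n (fun a => v a.succ) f = fun y =>
        (ContinuousMultilinearMap.apply ℝ (fun _ : Fin n => E m) ℝ
          (fun a => sgl ((fun a => v a.succ) a))) (iteratedFDeriv ℝ n f y) := by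
      funext y; exact IH _ y
    show fderiv ℝ (pdIter n (fun a => v a.succ) f) x (sgl (v 0)) = _
    have hcomp := (((ContinuousMultilinearMap.apply ℝ (fun _ : Fin n => E m) ℝ
      (fun a => sgl ((fun a => v a.succ) a))).hasFDerivAt).comp x hd.hasFDerivAt).fderiv
    rw [htail]
    rw [show (fun y => (ContinuousMultilinearMap.apply ℝ (fun _ : Fin n => E m) ℝ
        (fun a => sgl ((fun a => v a.succ) a))) (iteratedFDeriv ℝ n f y)) =
      (ContinuousMultilinearMap.apply ℝ (fun _ : Fin n => E m) ℝ
        (fun a => sgl ((fun a => v a.succ) a))) ∘ (iteratedFDeriv ℝ n f) from rfl, hcomp]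
    exact (iteratedFDeriv_succ_apply_left (fun a => sgl (v a))).symm

lemma entire_ext {f g : E m → ℝ} (hf : Entire f) (hg : Entire g)
    (h : ∀ (n : ℕ) (v : Fin n → Fin m), pdIter n v f 0 = pdIter n v g 0) : f = g := by
  have hfc : ContDiff ℝ (⊤ : ℕ∞) f := entire_contDiff hf
  have hgc : ContDiff ℝ (⊤ : ℕ∞) g := entire_contDiff hg
  obtain ⟨p, hp⟩ := hf
  obtain ⟨q, hq⟩ := hg
  have hIFD : ∀ n : ℕ, iteratedFDeriv ℝ n f 0 = iteratedFDeriv ℝ n g 0 := by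
    intro n
    apply ContinuousMultilinearMap.toMultilinearMap_injective
    apply Module.Basis.ext_multilinear (fun _ => (EuclideanSpace.basisFun (Fin m) ℝ).toBasis)
    intro v
    have h1 := (pdIter_eq_iteratedFDeriv hfc n v 0).symm
    have h2 := (pdIter_eq_iteratedFDeriv hgc n v 0).symm
    simp only [OrthonormalBasis.coe_toBasis, EuclideanSpace.basisFun_apply]
    exact h1.trans ((h n v).trans (pdIter_eq_iteratedFDeriv hgc n v 0))
  funext x
  have hx : x ∈ Metric.eball (0 : E m) ⊤ := by
    rw [Metric.emetric_ball_top]; trivial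
  have h1 := hp.hasSum_iteratedFDeriv hx
  have h2 := hq.hasSum_iteratedFDeriv hx
  simp only [hIFD] at h1
  have := h1.unique h2
  simpa using this



variable {m : ℕ}

lemma pdIter_pd {f : E m → ℝ} (hf : ContDiff ℝ (⊤ : ℕ∞) f) (i : Fin m) (n : ℕ) (v : Fin n → Fin m) :
    pdIter n v (pd i f) = pd i (pdIter n v f) := by
  rw [pdIter_eq_Dl, pdIter_eq_Dl, ← Dl_append]
  have h2 : Dl (i :: List.ofFn v) f = pd i (Dl (List.ofFn v) f) := rfl
  rw [← h2]
  exact Dl_perm (List.perm_append_singleton i (List.ofFn v)) hf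

lemma pdIter_cons (n : ℕ) (i : Fin m) (v : Fin n → Fin m) (f : E m → ℝ) :
    pdIter (n + 1) (Fin.cons i v) f = pd i (pdIter n v f) := by
  simp only [pdIter, Fin.cons_zero, Fin.cons_succ]

lemma tail2_cons (j k : Fin m) {n : ℕ} (u : Fin (n + 1) → Fin m) :
    (fun a : Fin (n + 1) => (Fin.cons j (Fin.cons k u) : Fin (n + 3) → Fin m) a.succ.succ) = u := by
  funext a
  rw [Fin.cons_succ, Fin.cons_succ]

lemma w1_eq (j k : Fin m) {n : ℕ} (u : Fin (n + 1) → Fin m) :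
    (Fin.cons j (Fin.cons k u) : Fin (n + 3) → Fin m) 1 = k := by
  rw [show (1 : Fin (n + 3)) = Fin.succ 0 from (Fin.succ_zero_eq_one).symm,
    Fin.cons_succ, Fin.cons_zero]

lemma derivArray_cons (V : Fin m → Fin m → E m → ℝ) (n : ℕ) (i j k : Fin m)
    (v : Fin n → Fin m) :
    derivArray V (n + 1) (Fin.cons j (Fin.cons k (Fin.cons i v))) =
      pd i (pdIter n v (V j k)) 0 := by
  rw [derivArray, tail2_cons j k (Fin.cons i v), Fin.cons_zero, w1_eq, pdIter_cons]

lemma comp_swap (i j k : Fin m) {n : ℕ} (v : Fin n → Fin m) :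
    (Fin.cons j (Fin.cons k (Fin.cons i v)) : Fin (n + 3) → Fin m) ∘
      (Equiv.swap 0 (Fin.succ (Fin.succ (0 : Fin (n + 1))))) =
    Fin.cons i (Fin.cons k (Fin.cons j v)) := by
  funext t
  refine Fin.cases ?_ (fun s => ?_) t
  · rw [Function.comp_apply, Equiv.swap_apply_left]
    rw [Fin.cons_succ, Fin.cons_succ, Fin.cons_zero, Fin.cons_zero]
  · refine Fin.cases ?_ (fun r => ?_) s
    · have h1 : Equiv.swap (0 : Fin (n + 3)) (Fin.succ (Fin.succ 0)) (Fin.succ 0) = Fin.succ 0 :=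
        Equiv.swap_apply_of_ne_of_ne (Fin.succ_ne_zero 0)
          (by rw [ne_eq, Fin.succ_inj]; exact (Fin.succ_ne_zero 0).symm)
      rw [Function.comp_apply, h1, Fin.cons_succ, Fin.cons_succ, Fin.cons_zero, Fin.cons_zero]
    · refine Fin.cases ?_ (fun q => ?_) r
      · rw [Function.comp_apply, Equiv.swap_apply_right, Fin.cons_zero,
          Fin.cons_succ, Fin.cons_succ, Fin.cons_zero]
      · have h1 : Equiv.swap (0 : Fin (n + 3)) (Fin.succ (Fin.succ 0)) q.succ.succ.succ
            = q.succ.succ.succ :=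
          Equiv.swap_apply_of_ne_of_ne (Fin.succ_ne_zero _)
            (by rw [ne_eq, Fin.succ_inj, Fin.succ_inj]; exact Fin.succ_ne_zero q)
        rw [Function.comp_apply, h1]
        rw [Fin.cons_succ, Fin.cons_succ, Fin.cons_succ,
          Fin.cons_succ, Fin.cons_succ, Fin.cons_succ]

lemma step (V : Fin m → Fin m → E m → ℝ) (hsm : ∀ i j, ContDiff ℝ (⊤ : ℕ∞) (V i j))
    (hA : ∀ (ℓ : ℕ) (w : Fin (ℓ + 2) → Fin m) (π : Equiv.Perm (Fin (ℓ + 2))),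
      derivArray V ℓ (w ∘ π) = derivArray V ℓ w)
    (i j k : Fin m) (n : ℕ) (v : Fin n → Fin m) :
    pdIter n v (pd i (V j k)) 0 = pdIter n v (pd j (V i k)) 0 := by
  calc pdIter n v (pd i (V j k)) 0
      = pd i (pdIter n v (V j k)) 0 := congrFun (pdIter_pd (hsm j k) i n v) 0
    _ = derivArray V (n + 1) (Fin.cons j (Fin.cons k (Fin.cons i v))) :=
        (derivArray_cons V n i j k v).symm
    _ = derivArray V (n + 1) ((Fin.cons j (Fin.cons k (Fin.cons i v))) ∘
          (Equiv.swap 0 (Fin.succ (Fin.succ (0 : Fin (n + 1)))))) :=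
        (hA (n + 1) _ _).symm
    _ = derivArray V (n + 1) (Fin.cons i (Fin.cons k (Fin.cons j v))) := by
        rw [comp_swap]
    _ = pd j (pdIter n v (V i k)) 0 := derivArray_cons V n j i k v
    _ = pdIter n v (pd j (V i k)) 0 := (congrFun (pdIter_pd (hsm i k) j n v) 0).symm

end Aux

theorem taylor_symmetry_iff_derivative_symmetry
    (m : ℕ) (hm : 1 ≤ m)
    (V : Fin m → Fin m → E m → ℝ)
    (hV_entire : ∀ i j, Entire (V i j))
    (hV_symm : ∀ i j, ∀ x, V i j x = V j i x) :
    (∀ (ℓ : ℕ) (w : Fin (ℓ + 2) → Fin m) (π : Equiv.Perm (Fin (ℓ + 2))),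
        derivArray V ℓ (w ∘ π) = derivArray V ℓ w) ↔
    (∀ x : E m, ∀ i j k, pd i (V j k) x = pd j (V i k) x) := by
  have hsm : ∀ i j, ContDiff ℝ (⊤ : ℕ∞) (V i j) := fun i j => Aux.entire_contDiff (hV_entire i j)
  constructor
  · intro hA x i j k
    have hfun : pd i (V j k) = pd j (V i k) := by
      apply Aux.entire_ext (Aux.entire_pd (hV_entire j k) i) (Aux.entire_pd (hV_entire i k) j)
      intro n v
      exact Aux.step V hsm hA i j k n v
    rw [hfun]
  · intro hB ℓ w π
    exact Aux.invariance hsm (fun i j => funext (hV_symm i j))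
      (fun i j k => funext fun x => hB x i j k) ℓ w π

end
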